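/- arXiv:1503.06497 — 3 statements merged into one kernel-verified Lean document; each statement's English description precedes it below -/
import Mathlib

section
/- If a finite sequence of natural numbers d_1 ≥ d_2 ≥ ... ≥ d_n is the degree sequence of a simple undirected graph on n vertices, then for every 1 ≤ j ≤ n, the inequality ∑_{i=1}^j d_i ≤ j(j-1) + ∑_{i=j+1}^n min(d_i, j) holds. -/
/-!
Let `S` be any set of `j` vertices. Split each degree in `S` into neighbours inside and outside
`S`. A vertex of `S` has at most `j - 1` neighbours inside `S`; counting the edges leaving `S`
from their other end, a vertex `u ∉ S` receives at most `min (deg u) j` of them. Taking for `S`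
the first `j` vertices gives the inequality.
-/

open Finset

namespace SimpleGraph

variable {V : Type*} (G : SimpleGraph V) [DecidableRel G.Adj]

lemma degree_eq_card_adj_add_card_adj_compl [Fintype V] [DecidableEq V] (S : Finset V) (v : V) :
    G.degree v = #{u ∈ S | G.Adj v u} + #{u ∈ Sᶜ | G.Adj v u} := by
  rw [← card_neighborFinset_eq_degree, neighborFinset_eq_filter, ← card_union_of_disjoint
    (disjoint_filter_filter disjoint_compl_right), ← filter_union, union_compl]

lemma card_adj_le_card_sub_one [DecidableEq V] {S : Finset V} {v : V} (hv : v ∈ S) :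
    #{u ∈ S | G.Adj v u} ≤ #S - 1 := by
  rw [← card_erase_of_mem hv]
  exact card_le_card fun u hu ↦ by
    rw [mem_filter] at hu
    exact mem_erase.2 ⟨hu.2.ne', hu.1⟩

lemma card_adj_le_min_degree [Fintype V] (S : Finset V) (u : V) :
    #{v ∈ S | G.Adj v u} ≤ min (G.degree u) #S := by
  refine le_min ?_ (card_filter_le _ _)
  rw [← card_neighborFinset_eq_degree]
  exact card_le_card fun v hv ↦ by simpa [adj_comm] using (mem_filter.1 hv).2

theorem sum_degree_le_card_mul_add_sum_min [Fintype V] [DecidableEq V] (S : Finset V) :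
    ∑ v ∈ S, G.degree v ≤ #S * (#S - 1) + ∑ u ∈ Sᶜ, min (G.degree u) #S := by
  have hcross : ∑ v ∈ S, #{u ∈ Sᶜ | G.Adj v u} = ∑ u ∈ Sᶜ, #{v ∈ S | G.Adj v u} :=
    sum_card_bipartiteAbove_eq_sum_card_bipartiteBelow G.Adj
  calc ∑ v ∈ S, G.degree v
      = ∑ v ∈ S, #{u ∈ S | G.Adj v u} + ∑ u ∈ Sᶜ, #{v ∈ S | G.Adj v u} := by
        rw [← hcross, ← sum_add_distrib]
        exact sum_congr rfl fun v _ ↦ G.degree_eq_card_adj_add_card_adj_compl S v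
    _ ≤ ∑ _v ∈ S, (#S - 1) + ∑ u ∈ Sᶜ, min (G.degree u) #S := by
        gcongr with v hv u
        · exact G.card_adj_le_card_sub_one hv
        · exact G.card_adj_le_min_degree S u
    _ = #S * (#S - 1) + ∑ u ∈ Sᶜ, min (G.degree u) #S := by rw [sum_const, smul_eq_mul]

end SimpleGraph

lemma Fin.sum_filter_val_mem {M : Type*} [AddCommMonoid M] {n : ℕ} {s : Finset ℕ}
    (hs : s ⊆ range n) (f : ℕ → M) :
    ∑ v : Fin n with ↑v ∈ s, f v = ∑ i ∈ s, f i := by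
  rw [sum_filter, Fin.sum_univ_eq_sum_range (fun i ↦ if i ∈ s then f i else 0), ← sum_filter,
    filter_mem_eq_inter, inter_eq_right.2 hs]

theorem erdos_gallai_necessary_general (n : ℕ) (d : ℕ → ℕ)
    (G : SimpleGraph (Fin n)) [DecidableRel G.Adj]
    (hdeg : ∀ v : Fin n, G.degree v = d v.val) :
    ∀ j : ℕ, 1 ≤ j → j ≤ n →
      ∑ i ∈ Finset.range j, d i ≤ j * (j - 1) + ∑ i ∈ Finset.Ico j n, min (d i) j := by
  intro j _ hjn
  set S : Finset (Fin n) := {v | ↑v ∈ range j}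
  have hrange : range j ⊆ range n := range_subset_range.2 hjn
  have hIco : Ico j n ⊆ range n := range_eq_Ico n ▸ Ico_subset_Ico_left j.zero_le
  have hS : #S = j := by
    rw [card_eq_sum_ones, Fin.sum_filter_val_mem hrange (fun _ ↦ 1), sum_const, card_range,
      smul_eq_mul, mul_one]
  have hSc : Sᶜ = ({v | ↑v ∈ Ico j n} : Finset (Fin n)) := by
    rw [compl_filter]; exact filter_congr fun v _ ↦ by simp [v.isLt]
  have key := G.sum_degree_le_card_mul_add_sum_min S
  simp only [hdeg, hS, hSc] at key
  rwa [Fin.sum_filter_val_mem hrange, Fin.sum_filter_val_mem hIco fun i ↦ min (d i) j] at key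

/-- Erdős–Gallai, necessity: the degree sequence of a simple graph on `n`
vertices, listed in nonincreasing order, satisfies the Erdős–Gallai
inequalities. -/
theorem erdos_gallai_necessary (n : ℕ) (d : ℕ → ℕ)
    (hmono : ∀ i j : ℕ, i ≤ j → j < n → d j ≤ d i)
    (G : SimpleGraph (Fin n)) [DecidableRel G.Adj]
    (hdeg : ∀ v : Fin n, G.degree v = d v.val) :
    ∀ j : ℕ, 1 ≤ j → j ≤ n →
      ∑ i ∈ Finset.range j, d i ≤ j * (j - 1) + ∑ i ∈ Finset.Ico j n, min (d i) j :=
  erdos_gallai_necessary_general n d G hdeg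
end

section
/- If a nonincreasing sequence of natural numbers d_1 ≥ ... ≥ d_n has even sum and satisfies ∑_{i=1}^j d_i ≤ j(j-1) + ∑_{i=j+1}^n min(d_i, j) for every 1 ≤ j ≤ n, then there exists a simple undirected graph on n vertices whose degree sequence is exactly (d_1,...,d_n). -/
/-!
Choudum's induction on the degree sum. Let `s` be the last index with `d s ≠ 0` and `t` the last
index below `s` with `d t = d 0`. Lowering `d t` and `d s` by one keeps the sequence nonincreasing
and preserves the Erdős–Gallai inequalities: for `j ≤ t` the inequality at `j` has to be strict
before lowering, which follows from parity when `d 0 ≤ j` and from the inequality at `j + 1`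
otherwise. A realization of the lowered sequence gives one of `d`: join `t` and `s` if they are not
adjacent; otherwise, as `d 0 ≤ s`, some `w < s` other than `t` is not adjacent to `t`, and since
`w` has larger degree than `s` it has a neighbour `x` not adjacent to `s`; exchange the edge `w x`
for `t w` and `s x`.
-/

open Finset

namespace SimpleGraph
variable {V : Type*} [Fintype V] [DecidableEq V] {G : SimpleGraph V} [DecidableRel G.Adj]
  {u v w : V}

theorem degree_edge (huv : u ≠ v) (y : V) :
    (edge u v).degree y = if y = u ∨ y = v then 1 else 0 := by
  rw [← card_neighborFinset_eq_degree]
  split_ifs with h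
  · rw [card_eq_one]
    rcases h with rfl | rfl
    · exact ⟨v, by ext; simp only [mem_neighborFinset, edge_adj, mem_singleton]; grind⟩
    · exact ⟨u, by ext; simp only [mem_neighborFinset, edge_adj, mem_singleton]; grind⟩
  · rw [card_eq_zero, eq_empty_iff_forall_notMem]
    simp only [mem_neighborFinset, edge_adj]; grind

theorem degree_sup_edge (huv : u ≠ v) (h : ¬G.Adj u v) (y : V) :
    (G ⊔ edge u v).degree y = G.degree y + if y = u ∨ y = v then 1 else 0 := by
  rw [← degree_edge huv, ← card_neighborFinset_eq_degree, neighborFinset_sup,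
    card_union_of_disjoint (disjoint_neighborFinset_of_disjoint _ _ _ ((disjoint_edge G).2 h))]
  rfl

theorem degree_sdiff_edge_add (h : G.Adj u v) (y : V) :
    (G \ edge u v).degree y + (if y = u ∨ y = v then 1 else 0) = G.degree y := by
  rw [← degree_edge h.ne, ← card_neighborFinset_eq_degree, ← card_neighborFinset_eq_degree,
    neighborFinset_sdiff, card_sdiff_add_card_eq_card]
  · rfl
  · intro z hz
    rw [mem_neighborFinset, edge_adj] at hz
    rw [mem_neighborFinset]
    rcases hz with ⟨⟨rfl, rfl⟩ | ⟨rfl, rfl⟩, -⟩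
    exacts [h, h.symm]

theorem exists_adj_ne_not_adj_of_degree_lt (huv : G.Adj u v) (huw : ¬G.Adj u w)
    (hdeg : G.degree v < G.degree w) : ∃ x, G.Adj w x ∧ x ≠ v ∧ ¬G.Adj v x := by
  by_contra! hx
  have hsub : (G.neighborFinset w).erase v ⊆ (G.neighborFinset v).erase u := by
    intro x hxw
    simp only [mem_erase, mem_neighborFinset] at hxw ⊢
    exact ⟨fun hxu => huw (hxu ▸ hxw.2.symm), hx x hxw.2 hxw.1⟩
  have hcard := (pred_card_le_card_erase.trans (card_le_card hsub)).trans_eq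
    (card_erase_of_mem (mem_neighborFinset _ _ _ |>.2 huv.symm))
  simp only [card_neighborFinset_eq_degree] at hcard
  have := huv.symm.degree_pos_left
  omega

theorem exists_degree_eq_add_of_adj (huv : G.Adj u v) (hwu : w ≠ u) (huw : ¬G.Adj u w)
    (hdeg : G.degree v < G.degree w) :
    ∃ (H : SimpleGraph V) (_ : DecidableRel H.Adj),
      ∀ y, H.degree y = G.degree y + if y = u ∨ y = v then 1 else 0 := by
  obtain ⟨x, hwx, hxv, hvx⟩ := exists_adj_ne_not_adj_of_degree_lt huv huw hdeg
  have hwv : w ≠ v := by rintro rfl; exact lt_irrefl _ hdeg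
  have hxu : x ≠ u := by rintro rfl; exact huw hwx.symm
  have h₁ : ¬(G \ edge w x).Adj u w := fun h => huw h.1
  have h₂ : ¬((G \ edge w x) ⊔ edge u w).Adj v x := by
    simp only [sup_adj, sdiff_adj, edge_adj]
    grind [huv.ne, hwx.ne]
  refine ⟨(G \ edge w x) ⊔ edge u w ⊔ edge v x, inferInstance, fun y => ?_⟩
  have := degree_sdiff_edge_add hwx y
  rw [degree_sup_edge hxv.symm h₂, degree_sup_edge hwu.symm h₁]
  grind [huv.ne, hwx.ne]

end SimpleGraph

def IsGraphic {V : Type*} [Fintype V] (f : V → ℕ) : Prop :=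
  ∃ (G : SimpleGraph V) (_ : DecidableRel G.Adj), ∀ v, G.degree v = f v

theorem IsGraphic.zero {V : Type*} [Fintype V] : IsGraphic (0 : V → ℕ) :=
  ⟨⊥, inferInstance, fun v => SimpleGraph.bot_degree v⟩

namespace IsGraphic
open SimpleGraph
variable {V : Type*} [Fintype V] [DecidableEq V] {f : V → ℕ} {u v : V}

theorem add_pair (hf : IsGraphic f) (huv : u ≠ v) (A : Finset V) (huA : u ∉ A) (hvA : v ∉ A)
    (hcard : f u ≤ #A) (hA : ∀ w ∈ A, f v < f w) :
    IsGraphic fun y => f y + if y = u ∨ y = v then 1 else 0 := by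
  obtain ⟨G, _, hG⟩ := hf
  simp only [← hG] at hcard hA ⊢
  by_cases hadj : G.Adj u v
  · obtain ⟨w, hwA, huw⟩ : ∃ w ∈ A, ¬G.Adj u w := by
      by_contra! h
      have hsub : A ⊆ (G.neighborFinset u).erase v := fun w hw =>
        mem_erase.2 ⟨fun hwv => hvA (hwv ▸ hw), (mem_neighborFinset _ _ _).2 (h w hw)⟩
      have := card_le_card hsub
      rw [card_erase_of_mem ((mem_neighborFinset _ _ _).2 hadj), card_neighborFinset_eq_degree]
        at this
      have := hadj.degree_pos_left
      omega
    exact exists_degree_eq_add_of_adj hadj (fun h => huA (h ▸ hwA)) huw (hA w hwA)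
  · exact ⟨G ⊔ edge u v, inferInstance, degree_sup_edge huv hadj⟩

end IsGraphic

def egBound (n : ℕ) (d : ℕ → ℕ) (j : ℕ) : ℕ := j * (j - 1) + ∑ i ∈ Ico j n, min (d i) j

def ErdosGallai (n : ℕ) (d : ℕ → ℕ) : Prop :=
  ∀ j, 1 ≤ j → j ≤ n → ∑ i ∈ range j, d i ≤ egBound n d j

def lowerPair (d : ℕ → ℕ) (t s i : ℕ) : ℕ :=
  d i - (if i = t then 1 else 0) - (if i = s then 1 else 0)

section
variable {n : ℕ} {d : ℕ → ℕ} {t s j : ℕ}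

theorem sum_lowerPair_add (hts : t ≠ s) (ht : 1 ≤ d t) (hs : 1 ≤ d s) (F : Finset ℕ) :
    ∑ i ∈ F, lowerPair d t s i + ((if t ∈ F then 1 else 0) + (if s ∈ F then 1 else 0)) =
      ∑ i ∈ F, d i := by
  rw [← sum_ite_eq' F t (fun _ => 1), ← sum_ite_eq' F s (fun _ => 1), ← sum_add_distrib,
    ← sum_add_distrib]
  refine sum_congr rfl fun i _ => ?_
  simp only [lowerPair]
  split_ifs <;> subst_vars <;> omega

-- Lowering `d i` by one lowers `min (d i) j` only if `d i ≤ j`.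
theorem egBound_le_egBound_lowerPair_add (hts : t ≠ s) (j : ℕ) :
    egBound n d j ≤ egBound n (lowerPair d t s) j +
      ((if t ∈ Ico j n ∧ d t ≤ j then 1 else 0) + (if s ∈ Ico j n ∧ d s ≤ j then 1 else 0)) := by
  simp only [egBound, add_assoc, ite_and]
  rw [← sum_ite_eq' _ t (fun _ => if d t ≤ j then 1 else 0),
    ← sum_ite_eq' _ s (fun _ => if d s ≤ j then 1 else 0), ← sum_add_distrib, ← sum_add_distrib]
  gcongr with i
  simp only [lowerPair]
  split_ifs <;> subst_vars <;> omega

theorem mul_lt_egBound_of_le (hj : 1 ≤ j) (hdj : d j ≤ j) (hjs : j < s) (hsn : s < n)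
    (hds : 1 ≤ d s) : j * d j < egBound n d j := by
  have hpair : min (d j) j + min (d s) j ≤ ∑ i ∈ Ico j n, min (d i) j := by
    rw [← sum_pair (f := fun i => min (d i) j) hjs.ne]
    exact sum_le_sum_of_subset (by intro i; simp only [mem_insert, mem_singleton, mem_Ico]; omega)
  have hmul : (j - 1) * d j ≤ (j - 1) * j := Nat.mul_le_mul_left _ hdj
  obtain ⟨k, rfl⟩ : ∃ k, j = k + 1 := ⟨j - 1, by omega⟩
  simp only [egBound, Nat.add_sub_cancel] at hmul ⊢
  have : min (d s) (k + 1) ≥ 1 := by omega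
  rw [min_eq_left hdj] at hpair
  nlinarith

theorem mul_lt_egBound_of_lt {c : ℕ} (hblock : ∀ i ≤ j, d i = c) (hjc : j < c) (hjs : j < s)
    (hsn : s < n) (hds : 1 ≤ d s) (hdsj : d s ≤ j)
    (hEG : ∑ i ∈ range (j + 1), d i ≤ egBound n d (j + 1)) : j * c < egBound n d j := by
  set F := Ico (j + 1) n
  set M := ∑ i ∈ F, min (d i) j
  set P := #{i ∈ F | j < d i}
  have hR : egBound n d j = j * (j - 1) + j + M := by
    rw [egBound, sum_eq_sum_Ico_succ_bot (by omega), hblock j le_rfl, min_eq_right hjc.le]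
    ring
  have hR₁ : egBound n d (j + 1) = (j + 1) * j + (M + P) := by
    rw [egBound, Nat.add_sub_cancel, ← Nat.cast_id P, ← sum_boole, ← sum_add_distrib]
    congr 1
    exact sum_congr rfl fun i _ => by split_ifs <;> omega
  have hL₁ : ∑ i ∈ range (j + 1), d i = (j + 1) * c := by
    rw [sum_congr rfl fun i hi => hblock i (Nat.le_of_lt_succ (mem_range.1 hi))]
    simp
  have hM : j * P + 1 ≤ M := by
    have hsF : s ∈ F := mem_Ico.2 ⟨hjs, hsn⟩
    calc j * P + 1 ≤ ∑ i ∈ F, (j * (if j < d i then 1 else 0) + if i = s then 1 else 0) := by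
          rw [sum_add_distrib, ← mul_sum, sum_boole, sum_ite_eq', if_pos hsF, Nat.cast_id]
      _ ≤ M := sum_le_sum fun i _ => by split_ifs <;> subst_vars <;> omega
  rw [hR₁, hL₁] at hEG
  have hjj : j * (j - 1) + j = j * j := by cases j <;> simp [Nat.mul_succ]
  rw [hR, hjj]
  by_contra! h
  nlinarith [Nat.mul_le_mul_left j hEG, Nat.mul_le_mul_left (j + 1) h]

theorem even_sum_range_add_egBound (heven : Even (∑ i ∈ range n, d i)) (hjn : j ≤ n)
    (hle : ∀ i ∈ Ico j n, d i ≤ j) : Even (∑ i ∈ range j, d i + egBound n d j) := by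
  have htail : egBound n d j = j * (j - 1) + ∑ i ∈ Ico j n, d i := by
    rw [egBound, sum_congr rfl fun i hi => min_eq_left (hle i hi)]
  rw [htail, add_left_comm, sum_range_add_sum_Ico _ hjn]
  exact (Nat.even_mul_pred_self j).add heven

theorem erdosGallai_lowerPair (hEG : ErdosGallai n d)
    (hmono : ∀ i j, i ≤ j → j < n → d j ≤ d i) (heven : Even (∑ i ∈ range n, d i))
    (hts : t < s) (hsn : s < n) (hds : 1 ≤ d s) (hblock : ∀ i ≤ t, d i = d 0) :
    ErdosGallai n (lowerPair d t s) := by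
  intro j hj hjn
  have hdt : d s ≤ d t := hmono t s hts.le hsn
  have hL := sum_lowerPair_add (d := d) hts.ne (by omega) hds (range j)
  have hR := egBound_le_egBound_lowerPair_add (n := n) (d := d) hts.ne j
  have hEGj := hEG j hj hjn
  simp only [mem_range, mem_Ico] at hL hR
  rcases lt_or_ge t j with htj | hjt
  · split_ifs at hL hR <;> omega
  · have hLj : ∑ i ∈ range j, d i = j * d 0 := by
      rw [sum_congr rfl fun i hi => hblock i ((mem_range.1 hi).le.trans hjt)]
      simp
    have hdj := hblock j hjt
    have hdt0 := hblock t le_rfl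
    rcases le_or_gt (d 0) j with h0 | h0
    · have hlt := mul_lt_egBound_of_le (n := n) hj (by omega) (by omega) hsn hds
      rw [hdj] at hlt
      -- the strict inequality at `j` survives the loss of `2`, both sides having the same parity
      obtain ⟨m, hm⟩ := even_sum_range_add_egBound heven hjn fun i hi =>
        (hmono 0 i (Nat.zero_le _) (mem_Ico.1 hi).2).trans h0
      split_ifs at hL hR <;> omega
    · rcases lt_or_ge j (d s) with hsj | hsj
      · split_ifs at hL hR <;> omega
      · have hlt := mul_lt_egBound_of_lt (fun i hi => hblock i (by omega)) h0 (by omega) hsn hds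
          hsj (hEG (j + 1) (by omega) (by omega))
        split_ifs at hL hR <;> omega

theorem lowerPair_antitone (hmono : ∀ i j, i ≤ j → j < n → d j ≤ d i) (hts : t < s)
    (hgap : ∀ i, t < i → i < s → d i < d t) (hzero : ∀ i, s < i → i < n → d i = 0) :
    ∀ i j, i ≤ j → j < n → lowerPair d t s j ≤ lowerPair d t s i := by
  intro i j hij hjn
  have := hmono i j hij hjn
  have := hgap j
  have := hzero j
  simp only [lowerPair]
  split_ifs <;> subst_vars <;> omega

theorem exists_last_ne_zero (h : ∃ i < n, d i ≠ 0) :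
    ∃ s < n, d s ≠ 0 ∧ ∀ i, s < i → i < n → d i = 0 := by
  obtain ⟨i, hin, hi⟩ := h
  refine ⟨Nat.findGreatest (fun i => d i ≠ 0) (n - 1),
    (Nat.findGreatest_le _).trans_lt (by omega),
    Nat.findGreatest_spec (P := fun i => d i ≠ 0) (m := i) (by omega) hi,
    fun k hk hkn => ?_⟩
  simpa using Nat.findGreatest_is_greatest hk (by omega)

theorem head_le_of_erdosGallai (hEG : ErdosGallai n d) (hsn : s < n)
    (hzero : ∀ i, s < i → i < n → d i = 0) : d 0 ≤ s := by
  have h := hEG 1 le_rfl (by omega)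
  rw [egBound, sum_range_one, ← sum_Ico_consecutive _ (show 1 ≤ s + 1 by omega) hsn,
    sum_eq_zero (s := Ico (s + 1) n) fun i hi => by
      simp [hzero i (mem_Ico.1 hi).1 (mem_Ico.1 hi).2]] at h
  have := sum_le_card_nsmul (Ico 1 (s + 1)) (fun i => min (d i) 1) 1 fun _ _ => min_le_right _ _
  rw [Nat.card_Ico, smul_eq_mul] at this
  omega

theorem exists_last_eq_head (hmono : ∀ i j, i ≤ j → j < n → d j ≤ d i) (hs : 0 < s)
    (hsn : s < n) : ∃ t < s, (∀ i ≤ t, d i = d 0) ∧ ∀ i, t < i → i < s → d i < d t := by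
  set t := Nat.findGreatest (fun i => d i = d 0) (s - 1)
  have ht : d t = d 0 :=
    Nat.findGreatest_spec (P := fun i => d i = d 0) (m := 0) (Nat.zero_le _) rfl
  have hts : t < s := (Nat.findGreatest_le _).trans_lt (by omega)
  refine ⟨t, hts, fun i hi => ?_, fun i hti his => ?_⟩
  · have := hmono 0 i (Nat.zero_le _) (by omega)
    have := hmono i t hi (by omega)
    omega
  · have := Nat.findGreatest_is_greatest hti (by omega)
    have := hmono 0 i (Nat.zero_le _) (by omega)
    omega

theorem IsGraphic.of_lowerPair (hG : IsGraphic fun v : Fin n => lowerPair d t s v)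
    (hmono : ∀ i j, i ≤ j → j < n → d j ≤ d i) (hts : t < s) (hsn : s < n) (hds : 1 ≤ d s)
    (hdt : d t ≤ s) : IsGraphic fun v : Fin n => d v := by
  have hdst := hmono t s hts.le hsn
  let A : Finset (Fin n) :=
    ((range s).erase t).attachFin fun i hi => (mem_range.1 (mem_of_mem_erase hi)).trans hsn
  have hcard : lowerPair d t s t ≤ #A := by
    rw [card_attachFin, card_erase_of_mem (mem_range.2 hts), card_range]
    simp only [lowerPair, ↓reduceIte, if_neg hts.ne]
    omega
  have hlt : ∀ w ∈ A, lowerPair d t s s < lowerPair d t s w := fun w hw => by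
    rw [mem_attachFin, mem_erase, mem_range] at hw
    have := hmono w s hw.2.le hsn
    simp only [lowerPair, ↓reduceIte, if_neg hw.1, if_neg hw.2.ne, if_neg hts.ne']
    omega
  convert hG.add_pair (u := ⟨t, hts.trans hsn⟩) (v := ⟨s, hsn⟩) (Fin.ne_of_val_ne hts.ne) A
    (by simp [A]) (by simp [A]) hcard hlt with v
  obtain ⟨k, -⟩ := v
  simp only [lowerPair, Fin.ext_iff]
  split_ifs <;> subst_vars <;> omega

end

theorem isGraphic_of_erdosGallai {n : ℕ} {d : ℕ → ℕ}
    (hmono : ∀ i j, i ≤ j → j < n → d j ≤ d i) (heven : Even (∑ i ∈ range n, d i))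
    (hEG : ErdosGallai n d) : IsGraphic fun v : Fin n => d v := by
  induction hS : ∑ i ∈ range n, d i using Nat.strong_induction_on generalizing d with
  | _ S ih =>
  by_cases hz : ∀ i < n, d i = 0
  · convert IsGraphic.zero (V := Fin n) using 1
    funext v
    exact hz v v.2
  push Not at hz
  obtain ⟨s, hsn, hds, hzero⟩ := exists_last_ne_zero hz
  have hs0 := head_le_of_erdosGallai hEG hsn hzero
  have hds0 := hmono 0 s (Nat.zero_le _) hsn
  obtain ⟨t, hts, hblock, hgap⟩ := exists_last_eq_head hmono (by omega) hsn
  have hdt := hblock t le_rfl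
  have hsum := sum_lowerPair_add (d := d) hts.ne (by omega) (by omega) (range n)
  simp only [mem_range, if_pos hsn, if_pos (hts.trans hsn)] at hsum
  have hG : IsGraphic fun v : Fin n => lowerPair d t s v :=
    ih (S - 2) (by omega) (lowerPair_antitone hmono hts (by omega) hzero)
      (by obtain ⟨m, hm⟩ := heven; exact ⟨m - 1, by omega⟩)
      (erdosGallai_lowerPair hEG hmono heven hts hsn (by omega) hblock) (by omega)
  exact hG.of_lowerPair hmono hts hsn (by omega) (by omega)

/-- Erdős–Gallai, sufficiency: a nonincreasing natural sequence with even sum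
satisfying the Erdős–Gallai inequalities is realizable as the degree sequence of
a simple graph on `n` vertices. -/
theorem erdos_gallai_sufficient (n : ℕ) (d : ℕ → ℕ)
    (hmono : ∀ i j : ℕ, i ≤ j → j < n → d j ≤ d i)
    (heven : Even (∑ i ∈ Finset.range n, d i))
    (hEG : ∀ j : ℕ, 1 ≤ j → j ≤ n →
      ∑ i ∈ Finset.range j, d i ≤ j * (j - 1) + ∑ i ∈ Finset.Ico j n, min (d i) j) :
    ∃ (G : SimpleGraph (Fin n)) (_ : DecidableRel G.Adj),
      ∀ v : Fin n, G.degree v = d v.val :=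
  isGraphic_of_erdosGallai hmono heven hEG
end

section
/- There exists a time-varying graph G = (G_1, G_2) on 4 vertices such that each slice G_t has a 2-anonymous degree sequence, yet the matrix of temporal degree vectors is not 2-anonymous (i.e., some row of the degree matrix differs from all other rows). -/
/-!
Take `G₁` to be the single edge `0 — 1` and `G₂` the single edge `1 — 2`. Both slices have
degree sequence `(1, 1, 0, 0)` up to order, so each is 2-anonymous, but the temporal degree
vectors of the vertices `0, 1, 2, 3` are `(1, 0), (1, 1), (0, 1), (0, 0)`, pairwise distinct.
-/

namespace SimpleGraph

variable {V : Type*} [Fintype V] [DecidableEq V]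

theorem degree_edge_of_ne {s t : V} (h : s ≠ t) (v : V) :
    (edge s t).degree v = if v = s ∨ v = t then 1 else 0 := by
  rw [← card_neighborFinset_eq_degree]
  split_ifs with hv
  · rw [Finset.card_eq_one]
    rcases hv with rfl | rfl
    · exact ⟨t, by ext; grind [mem_neighborFinset]⟩
    · exact ⟨s, by ext; grind [mem_neighborFinset]⟩
  · rw [Finset.card_eq_zero]
    ext; grind [mem_neighborFinset]

end SimpleGraph

/-- There is a time-varying graph `(G₁, G₂)` on 4 vertices such that each slice
has a 2-anonymous degree sequence, yet the matrix of temporal degree vectors is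
not 2-anonymous: some vertex has a temporal degree vector different from that of
every other vertex. -/
theorem slice_anonymity_not_sufficient :
    ∃ (G₁ G₂ : SimpleGraph (Fin 4)) (_ : DecidableRel G₁.Adj) (_ : DecidableRel G₂.Adj),
      (∀ i : Fin 4,
        2 ≤ (Finset.univ.filter (fun j : Fin 4 => G₁.degree j = G₁.degree i)).card) ∧
      (∀ i : Fin 4,
        2 ≤ (Finset.univ.filter (fun j : Fin 4 => G₂.degree j = G₂.degree i)).card) ∧
      ∃ i : Fin 4, ∀ j : Fin 4, j ≠ i →
        ¬ (G₁.degree j = G₁.degree i ∧ G₂.degree j = G₂.degree i) := by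
  refine ⟨SimpleGraph.edge 0 1, SimpleGraph.edge 1 2, inferInstance, inferInstance, ?_⟩
  simp only [SimpleGraph.degree_edge_of_ne (show (0 : Fin 4) ≠ 1 by decide),
    SimpleGraph.degree_edge_of_ne (show (1 : Fin 4) ≠ 2 by decide)]
  decide
end
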